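/- arXiv:1701.03752 — 4 statements merged into one kernel-verified Lean document; each statement's English description precedes it below -/
import Mathlib

section
/- For every inductive partially ordered set (P, ≤) (i.e., one in which every linearly ordered subset has a least upper bound) and every expansive function f : P → P (i.e., x ≤ f(x) for all x ∈ P), there exists x* ∈ P with f(x*) = x*. -/
/-- **Zermelo's Fixed Point Theorem.** If `(P, ≤)` is an inductive partial order
(every chain, including the empty one, has a least upper bound) and `f : P → P` is
expansive (`x ≤ f x` for all `x`), then `f` has a fixed point. -/
theorem zermelo_fixed_point {P : Type*} [PartialOrder P]
    (hind : ∀ C : Set P, IsChain (· ≤ ·) C → ∃ s : P, IsLUB C s)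
    (f : P → P) (hf : ∀ x : P, x ≤ f x) :
    ∃ x : P, f x = x := by
  obtain ⟨m, hm⟩ := zorn_le fun C hC => (hind C hC).elim fun _ hs => hs.bddAbove
  exact ⟨m, (hm (hf m)).antisymm (hf m)⟩
end

section
/- Let X be a separable Banach space and K ⊆ X. Then K is weakly compact (compact in the weak topology) if and only if K is weakly closed and for every sequence (x_n) in K there exist an infinite set L ⊆ ℕ and a point x ∈ K such that for every x* in the closed unit ball of the dual, lim_{n ∈ L} x*(x_n) = x*(x). -/
/-!
Let `E` be separable and `J : E → E**` the canonical embedding. For `v ∈ E**`, fix a dense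
sequence `u k` and functionals `e k` of norm `≤ 1` with `‖v - J (u k)‖ ≤ 2 ‖(v - J (u k)) (e k)‖`.
If `v` and `J x` agree on every `e k`, then `‖v - J x‖ ≤ 3 ‖x - u k‖` for all `k`, so `v = J x`:
countably many functionals decide whether `v` is the point evaluation at `x`.

With `v = 0` this gives a countable separating family of functionals, so weakly compact sets are
metrizable and hence weakly sequentially compact. Conversely, a weakly sequentially compact set `S`
is bounded, and `J S` is weak-* closed: a weak-* limit point `v` of `J S` is, on the countably
many functionals attached to `v`, the limit of a sequence from `S`, whose weakly convergent
subsequence has a limit `x ∈ S` with `J x = v`. Banach–Alaoglu then makes `S` weakly compact.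
-/

open Filter Topology Set Bornology NormedSpace TopologicalSpace

theorem StrictMono.map_atTop_eq_inf_principal_range {φ : ℕ → ℕ} (hφ : StrictMono φ) :
    map φ atTop = atTop ⊓ 𝓟 (range φ) := by
  refine le_antisymm (le_inf hφ.tendsto_atTop (by simp)) fun s hs => ?_
  obtain ⟨N, hN⟩ := mem_atTop_sets.1 (mem_map.1 hs)
  rw [mem_inf_principal]
  filter_upwards [mem_atTop (φ N)]
  rintro _ hk ⟨m, rfl⟩
  exact hN m (hφ.le_iff_le.1 hk)

theorem Set.Infinite.exists_strictMono_map_atTop_eq {L : Set ℕ} (hL : L.Infinite) :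
    ∃ φ : ℕ → ℕ, StrictMono φ ∧ map φ atTop = atTop ⊓ 𝓟 L := by
  refine ⟨Nat.nth L, Nat.nth_strictMono hL, ?_⟩
  rw [(Nat.nth_strictMono hL).map_atTop_eq_inf_principal_range, Nat.range_nth_of_infinite hL]
  rfl

theorem ContinuousLinearMap.exists_norm_le_one_norm_le_two_mul_norm_apply {𝕜 E F : Type*}
    [DenselyNormedField 𝕜] [NormedAddCommGroup E] [NormedSpace 𝕜 E]
    [SeminormedAddCommGroup F] [NormedSpace 𝕜 F] (f : E →L[𝕜] F) :
    ∃ x, ‖x‖ ≤ 1 ∧ ‖f‖ ≤ 2 * ‖f x‖ := by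
  rcases (norm_nonneg f).eq_or_lt with h | h
  · refine ⟨0, ?_, ?_⟩
    · rw [norm_zero]; exact zero_le_one
    · rw [← h, map_zero, norm_zero, mul_zero]
  · obtain ⟨x, hx, hfx⟩ := f.exists_lt_apply_of_lt_opNorm (half_lt_self h)
    exact ⟨x, hx.le, by linarith⟩

section

variable {𝕜 E : Type*} [RCLike 𝕜] [NormedAddCommGroup E] [NormedSpace 𝕜 E]

theorem tendsto_toWeakSpace_iff_forall_norm_le_one {α : Type*} {l : Filter α} {u : α → E}
    {x : E} :
    Tendsto (fun a => toWeakSpace 𝕜 E (u a)) l (𝓝 (toWeakSpace 𝕜 E x)) ↔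
      ∀ f : StrongDual 𝕜 E, ‖f‖ ≤ 1 → Tendsto (fun a => f (u a)) l (𝓝 (f x)) := by
  have hinj : Function.Injective (topDualPairing 𝕜 E).flip := fun x y h =>
    SeparatingDual.eq_iff_forall_dual_eq.2 fun f => LinearMap.congr_fun h f
  refine (WeakBilin.tendsto_iff_forall_eval_tendsto _
    (f := fun a => toWeakSpace 𝕜 E (u a)) hinj).trans ⟨fun h f _ => h f, fun h f => ?_⟩
  show Tendsto (fun a => f (u a)) l (𝓝 (f x))
  rcases eq_or_ne f 0 with rfl | hf
  · exact tendsto_const_nhds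
  have hf' : (‖f‖ : 𝕜) ≠ 0 := by exact_mod_cast norm_ne_zero_iff.2 hf
  have hunit : ‖(‖f‖⁻¹ : 𝕜) • f‖ ≤ 1 := by
    rw [norm_smul, norm_inv, RCLike.norm_ofReal, abs_norm,
      inv_mul_cancel₀ (norm_ne_zero_iff.2 hf)]
  simpa [← mul_assoc, mul_inv_cancel₀ hf'] using (h _ hunit).const_mul (‖f‖ : 𝕜)

theorem exists_seq_inclusionInDoubleDual_eq_of_forall_apply_eq [SeparableSpace E]
    (v : StrongDual 𝕜 (StrongDual 𝕜 E)) :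
    ∃ e : ℕ → StrongDual 𝕜 E, ∀ x : E, (∀ j, e j x = v (e j)) →
      inclusionInDoubleDual 𝕜 E x = v := by
  let J := inclusionInDoubleDualLi (E := E) 𝕜
  let u := denseSeq E
  choose e he_norm he_apply using
    fun k => (v - J (u k)).exists_norm_le_one_norm_le_two_mul_norm_apply
  refine ⟨e, fun x hx => ?_⟩
  have hdist : ∀ k, dist (J x) v ≤ 3 * dist x (u k) := by
    intro k
    have hk : ‖(v - J (u k)) (e k)‖ ≤ dist x (u k) :=
      calc ‖(v - J (u k)) (e k)‖ = ‖e k (x - u k)‖ := by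
            rw [sub_apply, ← hx k, map_sub]; rfl
        _ ≤ ‖e k‖ * ‖x - u k‖ := (e k).le_opNorm _
        _ ≤ dist x (u k) := by
          rw [dist_eq_norm]; exact mul_le_of_le_one_left (norm_nonneg _) (he_norm k)
    calc dist (J x) v ≤ dist (J x) (J (u k)) + dist v (J (u k)) := dist_triangle_right _ _ _
      _ ≤ dist x (u k) + 2 * dist x (u k) := by
        rw [J.dist_map, dist_eq_norm v]
        gcongr
        exact (he_apply k).trans (by gcongr)
      _ = 3 * dist x (u k) := by ring
  have hx0 := (denseRange_denseSeq E).induction_on (p := fun w => dist (J x) v ≤ 3 * dist x w) x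
    (isClosed_le continuous_const (by fun_prop)) hdist
  rw [dist_self, mul_zero] at hx0
  exact dist_le_zero.1 hx0

theorem IsCompact.isSeqCompact_of_separating {Y Z : Type*} [TopologicalSpace Y] [MetricSpace Z]
    {s : Set Y} (hs : IsCompact s) {f : ℕ → Y → Z} (hf : ∀ i, Continuous (f i))
    (hsep : ∀ x ∈ s, ∀ y ∈ s, (∀ i, f i x = f i y) → x = y) : IsSeqCompact s := by
  have : CompactSpace s := isCompact_iff_compactSpace.1 hs
  have : MetrizableSpace s :=
    Metric.PiNatEmbed.TopologicalSpace.MetrizableSpace.of_countable_separating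
      (fun i (x : s) => f i x) (fun i => (hf i).comp continuous_subtype_val) fun x y hxy => by
        by_contra! h
        exact hxy (Subtype.ext (hsep _ x.2 _ y.2 h))
  simpa using IsSeqCompact.range continuous_subtype_val.seqContinuous (f := ((↑) : s → Y))

namespace WeakSpace

theorem isSeqCompact_of_isCompact [SeparableSpace E] {S : Set (WeakSpace 𝕜 E)}
    (hS : IsCompact S) : IsSeqCompact S := by
  obtain ⟨e, he⟩ :=
    exists_seq_inclusionInDoubleDual_eq_of_forall_apply_eq (𝕜 := 𝕜) (E := E) 0
  refine hS.isSeqCompact_of_separating (f := fun j w => e j ((toWeakSpace 𝕜 E).symm w))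
    (fun j => WeakBilin.eval_continuous _ (e j)) fun x _ y _ hxy => ?_
  have hJ : inclusionInDoubleDual 𝕜 E ((toWeakSpace 𝕜 E).symm x - (toWeakSpace 𝕜 E).symm y) = 0 :=
    he _ fun j => by simp [hxy j]
  refine (toWeakSpace 𝕜 E).symm.injective (sub_eq_zero.1 ((inclusionInDoubleDualLi 𝕜).injective ?_))
  rw [LinearIsometry.map_zero]
  exact hJ

theorem isBounded_range_of_tendsto {u : ℕ → E} {a : WeakSpace 𝕜 E}
    (h : Tendsto (fun n => toWeakSpace 𝕜 E (u n)) atTop (𝓝 a)) : IsBounded (range u) := by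
  have hJ := ((inclusionInDoubleDualWeak 𝕜 E).continuous.tendsto a).comp h
  have hb := WeakDual.isBounded_iff_isVonNBounded.2 (hJ.isVonNBounded_range 𝕜)
  refine ((inclusionInDoubleDualLi 𝕜).antilipschitz.isBounded_preimage hb).subset ?_
  rintro _ ⟨n, rfl⟩
  exact ⟨n, rfl⟩

theorem isBounded_preimage_of_isSeqCompact {S : Set (WeakSpace 𝕜 E)} (hS : IsSeqCompact S) :
    IsBounded (toWeakSpace 𝕜 E ⁻¹' S) := by
  by_contra h
  simp only [isBounded_iff_forall_norm_le, not_exists, not_forall, not_le] at h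
  choose u huS hu using fun n : ℕ => h n
  obtain ⟨a, -, φ, hφ, ha⟩ := hS huS
  obtain ⟨C, hC⟩ := isBounded_iff_forall_norm_le.1 (isBounded_range_of_tendsto ha)
  obtain ⟨n, hn⟩ := exists_nat_gt C
  have hle : ‖u (φ n)‖ ≤ C := hC _ ⟨n, rfl⟩
  have hφn : (n : ℝ) ≤ φ n := by exact_mod_cast hφ.id_le n
  linarith [hu (φ n)]

theorem isClosed_image_inclusionInDoubleDualWeak_of_isSeqCompact [SeparableSpace E]
    {S : Set (WeakSpace 𝕜 E)} (hS : IsSeqCompact S) :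
    IsClosed (inclusionInDoubleDualWeak 𝕜 E '' S) := by
  refine closure_subset_iff_isClosed.1 fun v hv => ?_
  obtain ⟨e, he⟩ :=
    exists_seq_inclusionInDoubleDual_eq_of_forall_apply_eq (WeakDual.toStrongDual v)
  let Φ : WeakDual 𝕜 (StrongDual 𝕜 E) → ℕ → 𝕜 := fun w j => w (e j)
  have hΦ : Continuous Φ := continuous_pi fun j => WeakDual.eval_continuous (e j)
  obtain ⟨w, hw, hwv⟩ := mem_closure_iff_seq_limit.1
    (image_closure_subset_closure_image hΦ (mem_image_of_mem Φ hv))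
  simp only [image_image] at hw
  choose z hzS hz using hw
  obtain ⟨a, haS, φ, hφ, ha⟩ := hS hzS
  have hlim : Φ (inclusionInDoubleDualWeak 𝕜 E a) = Φ v :=
    tendsto_nhds_unique
      (((hΦ.comp (inclusionInDoubleDualWeak 𝕜 E).continuous).tendsto a).comp ha)
      (by simpa [Function.comp_def, hz] using hwv.comp hφ.tendsto_atTop)
  exact ⟨a, haS, he ((toWeakSpace 𝕜 E).symm a) fun j => congr_fun hlim j⟩

theorem isCompact_iff_isClosed_and_isSeqCompact [SeparableSpace E] {S : Set (WeakSpace 𝕜 E)} :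
    IsCompact S ↔ IsClosed S ∧ IsSeqCompact S := by
  refine ⟨fun hS => ⟨hS.isClosed, isSeqCompact_of_isCompact hS⟩, fun ⟨hclosed, hseq⟩ => ?_⟩
  rw [← hclosed.closure_eq]
  exact isCompact_closure_of_isBounded 𝕜 E S (isBounded_preimage_of_isSeqCompact hseq)
    ((isClosed_image_inclusionInDoubleDualWeak_of_isSeqCompact hseq).closure_subset.trans
      (image_subset_range _ _))

end WeakSpace

theorem isSeqCompact_image_toWeakSpace_iff {K : Set E} :
    IsSeqCompact (toWeakSpace 𝕜 E '' K) ↔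
      ∀ xs : ℕ → E, (∀ n, xs n ∈ K) → ∃ L : Set ℕ, L.Infinite ∧ ∃ x ∈ K,
        ∀ f : StrongDual 𝕜 E, ‖f‖ ≤ 1 →
          Tendsto (fun n => f (xs n)) (atTop ⊓ 𝓟 L) (𝓝 (f x)) := by
  constructor
  · intro hK xs hxs
    obtain ⟨_, ⟨x, hxK, rfl⟩, φ, hφ, hx⟩ := hK (x := fun n => toWeakSpace 𝕜 E (xs n))
      fun n => mem_image_of_mem _ (hxs n)
    refine ⟨range φ, infinite_range_of_injective hφ.injective, x, hxK,
      tendsto_toWeakSpace_iff_forall_norm_le_one.1 ?_⟩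
    rwa [← hφ.map_atTop_eq_inf_principal_range, tendsto_map'_iff]
  · intro hK w hw
    choose xs hxsK hxs using hw
    obtain rfl : (fun n => toWeakSpace 𝕜 E (xs n)) = w := funext hxs
    obtain ⟨L, hL, x, hxK, hx⟩ := hK xs hxsK
    obtain ⟨φ, hφ, hφL⟩ := hL.exists_strictMono_map_atTop_eq
    refine ⟨toWeakSpace 𝕜 E x, mem_image_of_mem _ hxK, φ, hφ, ?_⟩
    rw [← tendsto_map'_iff, hφL]
    exact tendsto_toWeakSpace_iff_forall_norm_le_one.2 hx

end

theorem weaklyCompact_iff_weaklyClosed_and_subseq_general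
    {X : Type*} [NormedAddCommGroup X] [NormedSpace ℝ X]
    [TopologicalSpace.SeparableSpace X] (K : Set X) :
    IsCompact (toWeakSpace ℝ X '' K) ↔
      (IsClosed (toWeakSpace ℝ X '' K) ∧
        ∀ xs : ℕ → X, (∀ n, xs n ∈ K) →
          ∃ L : Set ℕ, L.Infinite ∧ ∃ x ∈ K,
            ∀ xstar : X →L[ℝ] ℝ, ‖xstar‖ ≤ 1 →
              Filter.Tendsto (fun n => xstar (xs n))
                (Filter.atTop ⊓ Filter.principal L) (nhds (xstar x))) := by
  rw [WeakSpace.isCompact_iff_isClosed_and_isSeqCompact, isSeqCompact_image_toWeakSpace_iff]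

/-- **Eberlein–Šmulian (a form of).** A subset `K` of a separable Banach space is weakly
compact iff it is weakly closed and for every sequence `(x n)` in `K` there are an
infinite `L ⊆ ℕ` and `x ∈ K` such that `x*(x n) → x*(x)` along `L` for every `x*` in
the closed unit ball of the dual. -/
theorem weaklyCompact_iff_weaklyClosed_and_subseq
    {X : Type*} [NormedAddCommGroup X] [NormedSpace ℝ X] [CompleteSpace X]
    [TopologicalSpace.SeparableSpace X] (K : Set X) :
    IsCompact (toWeakSpace ℝ X '' K) ↔
      (IsClosed (toWeakSpace ℝ X '' K) ∧
        ∀ xs : ℕ → X, (∀ n, xs n ∈ K) →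
          ∃ L : Set ℕ, L.Infinite ∧ ∃ x ∈ K,
            ∀ xstar : X →L[ℝ] ℝ, ‖xstar‖ ≤ 1 →
              Filter.Tendsto (fun n => xstar (xs n))
                (Filter.atTop ⊓ Filter.principal L) (nhds (xstar x))) :=
  weaklyCompact_iff_weaklyClosed_and_subseq_general K
end

section
/- Let X be a separable Banach space, K ⊆ X weakly compact, and (x_n) a sequence in K. For each n let τ_{x_n} be the function on the dual unit ball B (with the weak* topology) given by τ_{x_n}(x*) = x*(x_n). Then every cluster point of the sequence (τ_{x_n}) in the product topology of ℝ^B is of the form τ_x for some x ∈ K; in particular every such cluster point is weak*-continuous on B. -/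
/-! The map `τ : x ↦ (x* ↦ x*(x))` is continuous from the weak topology of `X` to the product
topology of `ℝ^B`, so `τ(K)` is compact, hence closed in the Hausdorff space `ℝ^B`. A cluster
point of the sequence `τ(x n)` in `τ(K)` therefore lies in `τ(K)`, and each `τ x` is
weak*-continuous on `B`. -/

open Filter

theorem IsCompact.mem_image_of_mapClusterPt {α β ι : Type*} [TopologicalSpace α]
    [TopologicalSpace β] [T2Space β] {K : Set α} (hK : IsCompact K) {f : α → β}
    (hf : Continuous f) {l : Filter ι} {u : ι → α} (hu : ∀ᶠ i in l, u i ∈ K) {b : β}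
    (hb : MapClusterPt b l (f ∘ u)) : b ∈ f '' K :=
  (hK.image hf).isClosed.mem_of_mapClusterPt hb (hu.mono fun _ hi => Set.mem_image_of_mem f hi)

theorem WeakSpace.continuous_pi_eval {𝕜 E ι : Type*} [NormedField 𝕜] [NormedAddCommGroup E]
    [NormedSpace 𝕜 E] (e : ι → WeakDual 𝕜 E) :
    Continuous fun (x : WeakSpace 𝕜 E) i => e i ((toWeakSpace 𝕜 E).symm x) :=
  continuous_pi fun i => WeakBilin.eval_continuous (topDualPairing 𝕜 E).flip (e i)

theorem clusterPoint_of_tau_seq_general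
    {X : Type*} [NormedAddCommGroup X] [NormedSpace ℝ X]
    (K : Set X) (hK : IsCompact (toWeakSpace ℝ X '' K))
    (xs : ℕ → X) (hxs : ∀ n, xs n ∈ K)
    (g : {φ : WeakDual ℝ X // ∀ y : X, |φ y| ≤ ‖y‖} → ℝ)
    (hg : MapClusterPt (x := g) Filter.atTop
      (fun n (φ : {φ : WeakDual ℝ X // ∀ y : X, |φ y| ≤ ‖y‖}) => φ.1 (xs n))) :
    (∃ x ∈ K, g = fun φ => φ.1 x) ∧ Continuous g := by
  have hgK := hK.mem_image_of_mapClusterPt (WeakSpace.continuous_pi_eval Subtype.val)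
    (u := fun n => toWeakSpace ℝ X (xs n)) (Eventually.of_forall fun n => ⟨xs n, hxs n, rfl⟩) hg
  obtain ⟨_, ⟨x, hxK, rfl⟩, rfl⟩ := hgK
  exact ⟨⟨x, hxK, rfl⟩, (WeakDual.eval_continuous x).comp continuous_subtype_val⟩

/-- Let `K` be a weakly compact subset of a separable Banach space `X`, `(x n)` a
sequence in `K`, and `B` the closed unit ball of the dual with the weak* topology.
Every cluster point in the product topology of `ℝ^B` of the sequence of functions
`τ_{x n} : B → ℝ`, `τ_{x n}(x*) = x*(x n)`, is of the form `τ_x` for some `x ∈ K`;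
in particular it is weak*-continuous on `B`. -/
theorem clusterPoint_of_tau_seq
    {X : Type*} [NormedAddCommGroup X] [NormedSpace ℝ X] [CompleteSpace X]
    [TopologicalSpace.SeparableSpace X]
    (K : Set X) (hK : IsCompact (toWeakSpace ℝ X '' K))
    (xs : ℕ → X) (hxs : ∀ n, xs n ∈ K)
    (g : {φ : WeakDual ℝ X // ∀ y : X, |φ y| ≤ ‖y‖} → ℝ)
    (hg : MapClusterPt (x := g) Filter.atTop
      (fun n (φ : {φ : WeakDual ℝ X // ∀ y : X, |φ y| ≤ ‖y‖}) => φ.1 (xs n))) :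
    (∃ x ∈ K, g = fun φ => φ.1 x) ∧ Continuous g :=
  clusterPoint_of_tau_seq_general K hK xs hxs g hg
end

section
/- Let X be a separable Banach space, F a nonempty closed bounded convex subset of X, and suppose F is not weakly compact. Fix Borel selectors d_n : F(X) → X with (d_n(F)) dense in F. Then there exist 0 < ε ≤ 1 ≤ M and a sequence of naturals (u_n) such that for every m, the finite sequence (d_{u_1}(F), …, d_{u_m}(F)) is M-Schauder and ε-dominates the summing basis; i.e., the tree T(F, ε, M) has an infinite branch. -/
/-- The Effros-Borel σ-algebra on the closed subsets of a topological space. -/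
def effrosBorel (X : Type*) [TopologicalSpace X] :
    MeasurableSpace {F : Set X // IsClosed F} :=
  MeasurableSpace.generateFrom
    {S : Set {F : Set X // IsClosed F} |
      ∃ U : Set X, IsOpen U ∧ S = {C : {F : Set X // IsClosed F} | ((C : Set X) ∩ U).Nonempty}}

open Finset in
/-- `(x 0, …, x (m-1))` is `M`-Schauder: every partial sum of a linear combination is
bounded by `M` times the full sum, in norm. -/
def MSchauder {X : Type*} [NormedAddCommGroup X] [NormedSpace ℝ X]
    (M : ℝ) (m : ℕ) (x : ℕ → X) : Prop :=
  ∀ k ≤ m, ∀ a : ℕ → ℝ,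
    ‖∑ n ∈ Finset.range k, a n • x n‖ ≤ M * ‖∑ n ∈ Finset.range m, a n • x n‖

/-- `(x 0, …, x (m-1))` `ε`-dominates the summing basis: every convex combination with
positive coefficients has norm at least `ε`. -/
def DominatesSummingBasis {X : Type*} [NormedAddCommGroup X] [NormedSpace ℝ X]
    (ε : ℝ) (m : ℕ) (x : ℕ → X) : Prop :=
  ∀ a : ℕ → ℝ, (∀ n < m, 0 < a n) → ∑ n ∈ Finset.range m, a n = 1 →
    ε ≤ ‖∑ n ∈ Finset.range m, a n • x n‖

/-- The tree `T(F, ε, M)` of finite sequences `u` of naturals such that the corresponding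
finite sequence of selector values `(d (u 1) F, …, d (u m) F)` is `M`-Schauder and
`ε`-dominates the summing basis. -/
def treeT {X : Type*} [NormedAddCommGroup X] [NormedSpace ℝ X]
    (d : ℕ → {F : Set X // IsClosed F} → X) (F : {F : Set X // IsClosed F})
    (ε M : ℝ) : Set (List ℕ) :=
  {u | MSchauder M u.length (fun n => d (u.getD n 0) F) ∧
       DominatesSummingBasis ε u.length (fun n => d (u.getD n 0) F)}

/-!
Since `F` is not weakly compact, Banach–Alaoglu produces a weak* limit point `x` of `F` in the
bidual which does not lie in `X`; as `X` is complete, `x` is at distance `δ > 0` from `X`.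
Mazur's technique then picks `d (u 0), d (u 1), …` one at a time: each new `d (u k)` is weak*
close to `x` on a finite set of functionals almost norming the span of `x` and the earlier
differences, which makes `(x, d (u 0) - x, d (u 1) - x, …)` a basic sequence with constant `2`.
Because `x` stays at distance `δ` from `X`, the coefficient sums `∑ a n` are controlled, so
`(d (u n))` itself is basic. A functional `f` of norm `≤ 1` with `f x > δ / 2` stays above
`δ / 4` on every `d (u n)`, hence on their convex combinations.
-/

section

open NormedSpace Metric Set

theorem norm_le_mul_norm_of_ratio_le {Z : Type*} [SeminormedAddCommGroup Z] (p : ℕ → Z)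
    {a : ℕ → ℝ} {C : ℝ} (ha : ∀ k, 1 ≤ a k) (haC : ∀ k, a k ≤ C)
    (hp : ∀ k, a (k + 1) / a k * ‖p k‖ ≤ ‖p (k + 1)‖) {k m : ℕ} (hkm : k ≤ m) :
    ‖p k‖ ≤ C * ‖p m‖ := by
  have hpos : ∀ k, 0 < a k := fun k => one_pos.trans_le (ha k)
  have hC : 0 ≤ C := zero_le_one.trans ((ha 0).trans (haC 0))
  have hmono : Monotone fun k => ‖p k‖ / a k := monotone_nat_of_le_succ fun k => by
    have := hp k
    rw [div_mul_eq_mul_div, div_le_iff₀ (hpos k)] at this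
    rw [div_le_div_iff₀ (hpos k) (hpos (k + 1))]
    linarith
  calc ‖p k‖ = a k * (‖p k‖ / a k) := by field_simp [(hpos k).ne']
    _ ≤ C * (‖p m‖ / a m) := mul_le_mul (haC k) (hmono hkm) (by have := hpos k; positivity) hC
    _ ≤ C * ‖p m‖ := by gcongr; exact div_le_self (norm_nonneg _) (ha m)

section Dual

variable {Y : Type*} [NormedAddCommGroup Y] [NormedSpace ℝ Y]

theorem exists_norm_le_one_lt_apply (f : StrongDual ℝ Y) {r : ℝ} (hr : r < ‖f‖) :
    ∃ y : Y, ‖y‖ ≤ 1 ∧ r < f y := by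
  obtain ⟨y, hy, hry⟩ := f.exists_lt_apply_of_lt_opNorm hr
  rcases le_total 0 (f y) with hfy | hfy
  · exact ⟨y, hy.le, by rwa [Real.norm_of_nonneg hfy] at hry⟩
  · exact ⟨-y, by simpa using hy.le, by rwa [Real.norm_of_nonpos hfy, ← map_neg] at hry⟩

theorem exists_finset_almost_norming (E : Submodule ℝ (StrongDual ℝ Y)) [FiniteDimensional ℝ E]
    {η : ℝ} (hη : 0 < η) :
    ∃ G : Finset Y, (∀ g ∈ G, ‖g‖ ≤ 1) ∧ ∀ e ∈ E, ∃ g ∈ G, (1 - η) * ‖e‖ ≤ e g := by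
  classical
  set K : Set (StrongDual ℝ Y) := Subtype.val '' sphere (0 : E) 1
  have hK : ∀ e ∈ K, ‖e‖ = 1 := by
    rintro _ ⟨e, he, rfl⟩
    exact mem_sphere_zero_iff_norm.1 he
  obtain ⟨t, htK, ht, hcover⟩ :=
    ((isCompact_sphere (0 : E) 1).image continuous_subtype_val).finite_cover_balls (half_pos hη)
  have hnorming : ∀ e' ∈ t, ∃ g : Y, ‖g‖ ≤ 1 ∧ 1 - η / 2 < e' g := fun e' he' =>
    exists_norm_le_one_lt_apply e' (by rw [hK e' (htK he')]; linarith)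
  choose! g hg1 hg using hnorming
  refine ⟨insert 0 (ht.toFinset.image g), ?_, fun e he => ?_⟩
  · simp only [Finset.mem_insert, Finset.mem_image, Finite.mem_toFinset]
    rintro _ (rfl | ⟨e', he', rfl⟩)
    exacts [by simp, hg1 e' he']
  rcases eq_or_ne e 0 with rfl | he0
  · exact ⟨0, Finset.mem_insert_self _ _, by simp⟩
  have hpos : 0 < ‖e‖ := norm_pos_iff.2 he0
  have he₁ : ‖e‖⁻¹ • e ∈ K := ⟨⟨_, E.smul_mem _ he⟩, mem_sphere_zero_iff_norm.2 (by
      show ‖‖e‖⁻¹ • e‖ = 1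
      rw [norm_smul, norm_inv, norm_norm, inv_mul_cancel₀ hpos.ne']), rfl⟩
  obtain ⟨e', he't, he'⟩ := mem_iUnion₂.1 (hcover he₁)
  refine ⟨g e', Finset.mem_insert_of_mem (Finset.mem_image_of_mem _ (ht.mem_toFinset.2 he't)), ?_⟩
  have hclose : |(‖e‖⁻¹ • e - e') (g e')| ≤ η / 2 := by
    have := (‖e‖⁻¹ • e - e').le_opNorm_of_le (hg1 e' he't)
    rw [mul_one, ← dist_eq_norm] at this
    exact this.trans (mem_ball.1 he').le
  rw [sub_apply, smul_apply, smul_eq_mul, abs_le] at hclose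
  have := hg e' he't
  have key : (1 - η) ≤ ‖e‖⁻¹ * e (g e') := by linarith
  rwa [inv_mul_eq_div, le_div_iff₀ hpos] at key

theorem mul_norm_le_norm_add_smul {e w : StrongDual ℝ Y} {g : Y} {η δ : ℝ} (hη : 0 ≤ η)
    (hg : ‖g‖ ≤ 1) (heg : (1 - η) * ‖e‖ ≤ e g) (hwg : |w g| ≤ η * δ / 2) (hw : δ ≤ ‖w‖)
    (t : ℝ) : (1 - 2 * η) * ‖e‖ ≤ ‖e + t • w‖ := by
  -- Either `t • w` dominates `e`, or `g` almost norms `e` while barely seeing `t • w`.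
  rcases le_or_gt (2 * ‖e‖) (|t| * ‖w‖) with hlarge | hsmall
  · have : ‖t • w‖ ≤ ‖e + t • w‖ + ‖e‖ := by
      simpa using norm_sub_le (e + t • w) e
    rw [norm_smul, Real.norm_eq_abs] at this
    nlinarith [norm_nonneg e]
  · have htw : |t * w g| ≤ η * ‖e‖ := by
      rw [abs_mul]
      calc |t| * |w g| ≤ |t| * (η * ‖w‖ / 2) := by gcongr; exact hwg.trans (by gcongr)
        _ = η * (|t| * ‖w‖) / 2 := by ring
        _ ≤ η * ‖e‖ := by nlinarith
    have hnorm : (e + t • w) g ≤ ‖e + t • w‖ :=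
      (le_abs_self _).trans ((e + t • w).unit_le_opNorm g hg)
    rw [add_apply, smul_apply, smul_eq_mul] at hnorm
    linarith [neg_abs_le (t * w g)]

theorem exists_mul_norm_le_norm_add_smul_sub {v : ℕ → StrongDual ℝ Y} {x : StrongDual ℝ Y}
    (happrox : ∀ G : Finset Y, ∀ η > 0, ∃ n, ∀ g ∈ G, |v n g - x g| < η)
    {δ : ℝ} (hδ : 0 < δ) (hdist : ∀ n, δ ≤ ‖v n - x‖) (f : Y) {η : ℝ} (hη : 0 < η)
    (E : Submodule ℝ (StrongDual ℝ Y)) [FiniteDimensional ℝ E] {c : ℝ} (hc : c < 1) :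
    ∃ n, |v n f - x f| < η ∧ ∀ e ∈ E, ∀ t : ℝ, c * ‖e‖ ≤ ‖e + t • (v n - x)‖ := by
  classical
  obtain ⟨G, hG1, hG⟩ := exists_finset_almost_norming E (η := (1 - c) / 2) (by linarith)
  have hc' : 0 < 1 - c := by linarith
  obtain ⟨n, hn⟩ := happrox (insert f G) (min η ((1 - c) / 2 * δ / 2)) (by positivity)
  refine ⟨n, (hn f (Finset.mem_insert_self _ _)).trans_le (min_le_left _ _), fun e he t => ?_⟩
  obtain ⟨g, hgG, hg⟩ := hG e he
  have hwg : |(v n - x) g| ≤ (1 - c) / 2 * δ / 2 :=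
    (hn g (Finset.mem_insert_of_mem hgG)).le.trans (min_le_right _ _)
  have := mul_norm_le_norm_add_smul (by linarith) (hG1 g hgG) hg hwg (hdist n) t
  rwa [show 1 - 2 * ((1 - c) / 2) = c by ring] at this

theorem exists_subseq_norm_partial_sum_le_two_mul {v : ℕ → StrongDual ℝ Y} {x : StrongDual ℝ Y}
    (happrox : ∀ G : Finset Y, ∀ η > 0, ∃ n, ∀ g ∈ G, |v n g - x g| < η)
    {δ : ℝ} (hδ : 0 < δ) (hdist : ∀ n, δ ≤ ‖v n - x‖) (f : Y) {η : ℝ} (hη : 0 < η) :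
    ∃ c : ℕ → ℕ, (∀ n, |v (c n) f - x f| < η) ∧
      ∀ (t : ℝ) (a : ℕ → ℝ) {k m : ℕ}, k ≤ m →
        ‖t • x + ∑ n ∈ Finset.range k, a n • (v (c n) - x)‖ ≤
          2 * ‖t • x + ∑ n ∈ Finset.range m, a n • (v (c n) - x)‖ := by
  classical
  -- `r` decreases strictly from `2` to `1`: each step loses a factor `< 1`, all of them together
  -- at most a factor `2`.
  set r : ℕ → ℝ := fun k => 1 + (1 / 2) ^ k
  have hr1 : ∀ k, 1 ≤ r k := fun k => le_add_of_nonneg_right (by positivity)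
  have hr2 : ∀ k, r k ≤ 2 := fun k => by
    simp only [r]; linarith [pow_le_one₀ (by norm_num : (0 : ℝ) ≤ 1 / 2) (by norm_num) (n := k)]
  have hr : ∀ k, r (k + 1) / r k < 1 := fun k => by
    rw [div_lt_one (show 0 < r k by positivity)]
    exact (add_lt_add_iff_left 1).2
      (pow_lt_pow_right_of_lt_one₀ (by norm_num) (by norm_num) k.lt_succ_self)
  choose next hnext using fun k (S : Finset (StrongDual ℝ Y)) =>
    exists_mul_norm_le_norm_add_smul_sub happrox hδ hdist f hη (Submodule.span ℝ (S : Set _))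
      (hr k)
  obtain ⟨S, hS0, hS⟩ : ∃ S : ℕ → Finset (StrongDual ℝ Y),
      S 0 = {x} ∧ ∀ k, S (k + 1) = insert (v (next k (S k)) - x) (S k) :=
    ⟨fun k => Nat.rec {x} (fun k S => insert (v (next k S) - x) S) k, rfl, fun _ => rfl⟩
  refine ⟨fun k => next k (S k), fun k => (hnext k (S k)).1, fun t a k m hkm => ?_⟩
  have hmem : ∀ k, t • x + ∑ n ∈ Finset.range k, a n • (v (next n (S n)) - x) ∈
      Submodule.span ℝ (S k : Set (StrongDual ℝ Y)) := by
    intro k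
    induction k with
    | zero => simpa [hS0] using Submodule.smul_mem _ t (Submodule.mem_span_singleton_self x)
    | succ k ih =>
      rw [Finset.sum_range_succ, ← add_assoc, hS, Finset.coe_insert]
      exact add_mem (Submodule.span_mono (Set.subset_insert _ _) ih)
        (Submodule.smul_mem _ _ (Submodule.subset_span (Set.mem_insert _ _)))
  have hstep : ∀ k, r (k + 1) / r k * ‖t • x + ∑ n ∈ Finset.range k, a n • (v (next n (S n)) - x)‖
      ≤ ‖t • x + ∑ n ∈ Finset.range (k + 1), a n • (v (next n (S n)) - x)‖ := fun k => by
    rw [Finset.sum_range_succ, ← add_assoc]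
    exact (hnext k (S k)).2 _ (hmem k) (a k)
  exact norm_le_mul_norm_of_ratio_le _ hr1 hr2 hstep hkm

end Dual

theorem Isometry.exists_pos_le_norm_sub_of_notMem_range {X Z : Type*} [MetricSpace X]
    [CompleteSpace X] [Nonempty X] [NormedAddCommGroup Z] {j : X → Z} (hj : Isometry j) {x : Z}
    (hx : x ∉ range j) : ∃ δ > 0, ∀ z, δ ≤ ‖x - j z‖ :=
  ⟨infDist x (range j), (hj.isClosedEmbedding.isClosed_range.notMem_iff_infDist_pos
      ⟨_, mem_range_self (Classical.arbitrary X)⟩).1 hx,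
    fun z => by rw [← dist_eq_norm]; exact infDist_le_dist_of_mem (mem_range_self z)⟩

theorem abs_mul_le_norm_smul_sub {X Z : Type*} [AddCommGroup X] [Module ℝ X]
    [NormedAddCommGroup Z] [NormedSpace ℝ Z] (j : X →ₗ[ℝ] Z) {x : Z} {δ : ℝ}
    (hdist : ∀ z, δ ≤ ‖x - j z‖) (t : ℝ) (z : X) : |t| * δ ≤ ‖t • x - j z‖ := by
  rcases eq_or_ne t 0 with rfl | ht
  · simp
  calc |t| * δ ≤ |t| * ‖x - j (t⁻¹ • z)‖ := by gcongr; exact hdist _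
    _ = ‖t • x - j z‖ := by
      rw [← Real.norm_eq_abs, ← norm_smul, smul_sub, map_smul, smul_inv_smul₀ ht]

variable {X : Type*} [NormedAddCommGroup X] [NormedSpace ℝ X]

theorem mSchauder_of_basic {Z : Type*} [NormedAddCommGroup Z] [NormedSpace ℝ Z]
    (j : X →ₗ[ℝ] Z) (hj : ∀ z, ‖j z‖ = ‖z‖) {x : Z} {δ : ℝ} (hδ : 0 < δ)
    (hdist : ∀ z, δ ≤ ‖x - j z‖) {u : ℕ → X}
    (hbasic : ∀ (t : ℝ) (a : ℕ → ℝ) {k m : ℕ}, k ≤ m →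
      ‖t • x + ∑ n ∈ Finset.range k, a n • (j (u n) - x)‖ ≤
        2 * ‖t • x + ∑ n ∈ Finset.range m, a n • (j (u n) - x)‖)
    (m : ℕ) : MSchauder (6 * (1 + ‖x‖ / δ)) m u := by
  intro k hk a
  -- Writing `j (∑ a n • u n) = s • x + W`, basicness bounds `‖W‖` and `‖s • x‖` by the norm of
  -- the full sum, and the distance `δ` from `x` to `j X` then bounds `|s|`.
  set s : ℕ → ℝ := fun p => ∑ n ∈ Finset.range p, a n
  set W : ℕ → Z := fun p => ∑ n ∈ Finset.range p, a n • (j (u n) - x)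
  have hj' : ∀ p, j (∑ n ∈ Finset.range p, a n • u n) = s p • x + W p := fun p => by
    simp only [s, W, map_sum, map_smul, smul_sub, Finset.sum_sub_distrib, Finset.sum_smul]
    abel
  set B := ‖∑ n ∈ Finset.range m, a n • u n‖
  have hB : ‖s m • x + W m‖ = B := by rw [← hj', hj]
  have hsm : ‖s m • x‖ ≤ 2 * B := by
    simpa [W, hB] using hbasic (s m) a (Nat.zero_le m)
  have hWm : ‖W m‖ ≤ 3 * B := by
    calc ‖W m‖ = ‖(s m • x + W m) - s m • x‖ := by rw [add_sub_cancel_left]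
      _ ≤ ‖s m • x + W m‖ + ‖s m • x‖ := norm_sub_le _ _
      _ ≤ 3 * B := by rw [hB]; linarith
  have hWk : ‖W k‖ ≤ 6 * B := by
    have := hbasic 0 a hk
    simp only [zero_smul, zero_add] at this
    linarith
  have hsk : |s k| * δ ≤ ‖W k‖ := by
    have := abs_mul_le_norm_smul_sub j hdist (s k) (∑ n ∈ Finset.range k, a n • u n)
    rwa [hj', sub_add_cancel_left, norm_neg] at this
  have hsk' : |s k| ≤ 6 * B / δ := by rw [le_div_iff₀ hδ]; linarith
  calc ‖∑ n ∈ Finset.range k, a n • u n‖ = ‖s k • x + W k‖ := by rw [← hj', hj]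
    _ ≤ |s k| * ‖x‖ + ‖W k‖ := by
      simpa [norm_smul] using norm_add_le (s k • x) (W k)
    _ ≤ 6 * B / δ * ‖x‖ + 6 * B := by gcongr
    _ = 6 * (1 + ‖x‖ / δ) * B := by field_simp; ring

theorem dominatesSummingBasis_of_le_apply {ε : ℝ} (f : X →ₗ[ℝ] ℝ) (hf : ∀ z, f z ≤ ‖z‖)
    {u : ℕ → X} (hu : ∀ n, ε ≤ f (u n)) (m : ℕ) : DominatesSummingBasis ε m u := by
  intro a ha hsum
  calc ε = ∑ n ∈ Finset.range m, a n * ε := by rw [← Finset.sum_mul, hsum, one_mul]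
    _ ≤ ∑ n ∈ Finset.range m, a n * f (u n) := Finset.sum_le_sum fun n hn =>
      mul_le_mul_of_nonneg_left (hu n) (ha n (Finset.mem_range.1 hn)).le
    _ = f (∑ n ∈ Finset.range m, a n • u n) := by simp [map_sum]
    _ ≤ ‖∑ n ∈ Finset.range m, a n • u n‖ := hf _

theorem exists_branch_of_weakStar_approx {Y : Type*} [NormedAddCommGroup Y] [NormedSpace ℝ Y]
    [CompleteSpace X] (j : X →L[ℝ] StrongDual ℝ Y) (hj : Isometry j) (d : ℕ → X)
    {x : StrongDual ℝ Y} (hxX : x ∉ range j)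
    (happrox : ∀ G : Finset Y, ∀ η > 0, ∃ n, ∀ g ∈ G, |j (d n) g - x g| < η) :
    ∃ ε M : ℝ, 0 < ε ∧ ε ≤ 1 ∧ 1 ≤ M ∧
      ∃ c : ℕ → ℕ, ∀ m : ℕ, MSchauder M m (fun n => d (c n)) ∧
        DominatesSummingBasis ε m (fun n => d (c n)) := by
  have hjn : ∀ z, ‖j z‖ = ‖z‖ := hj.norm_map_of_map_zero (map_zero j)
  obtain ⟨δ, hδ, hdist⟩ := hj.exists_pos_le_norm_sub_of_notMem_range hxX
  obtain ⟨f, hf1, hfx⟩ := exists_norm_le_one_lt_apply x (r := δ / 2) (by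
    simpa using (half_lt_self hδ).trans_le (hdist 0))
  obtain ⟨c, hfc, hbasic⟩ := exists_subseq_norm_partial_sum_le_two_mul (v := fun n => j (d n))
    happrox hδ (fun n => norm_sub_rev x _ ▸ hdist _) f (η := δ / 4) (by positivity)
  have hε : ∀ n, min (δ / 4) 1 ≤ j (d (c n)) f := fun n => by
    linarith [abs_lt.1 (hfc n), min_le_left (δ / 4) 1]
  have hf : ∀ z, j z f ≤ ‖z‖ := fun z => calc
    j z f ≤ ‖j z‖ * ‖f‖ := (Real.le_norm_self _).trans ((j z).le_opNorm f)
    _ ≤ ‖z‖ := by rw [hjn]; exact mul_le_of_le_one_right (norm_nonneg z) hf1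
  refine ⟨min (δ / 4) 1, 6 * (1 + ‖x‖ / δ), lt_min (by positivity) one_pos, min_le_right _ _,
    by linarith [div_nonneg (norm_nonneg x) hδ.le], c, fun m => ⟨?_, ?_⟩⟩
  · exact mSchauder_of_basic (j : X →ₗ[ℝ] StrongDual ℝ Y) hjn hδ hdist hbasic m
  · exact dominatesSummingBasis_of_le_apply
      ((ContinuousLinearMap.apply ℝ ℝ f).comp j : X →ₗ[ℝ] ℝ) hf hε m

theorem exists_bidual_notMem_range_approx {F : Set X} (hcl : IsClosed F) (hconv : Convex ℝ F)
    (hbdd : Bornology.IsBounded F) (hnc : ¬ IsCompact (toWeakSpace ℝ X '' F)) (d : ℕ → X)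
    (hd : F ⊆ closure (range d)) :
    ∃ x : StrongDual ℝ (StrongDual ℝ X), x ∉ range (inclusionInDoubleDual ℝ X) ∧
      ∀ G : Finset (StrongDual ℝ X), ∀ η > 0, ∃ n, ∀ g ∈ G, |g (d n) - x g| < η := by
  set ι := inclusionInDoubleDualWeak ℝ X
  set e := toWeakSpace ℝ X
  -- Banach–Alaoglu: were the weak* closure of `F` in the bidual contained in `X`, the weakly
  -- closed set `F` would be weakly compact.
  obtain ⟨x, hxF, hxX⟩ : ∃ x ∈ closure (ι '' (e '' F)), x ∉ range ι := by
    by_contra! h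
    have := isCompact_closure_of_isBounded ℝ X (e '' F) (by rwa [e.injective.preimage_image]) h
    rw [← hconv.toWeakSpace_closure ℝ, hcl.closure_eq] at this
    exact hnc this
  have hxd : x ∈ closure (ι '' (e '' range d)) := by
    have hcont : Continuous (ι ∘ e) := ι.continuous.comp (toWeakSpaceCLM ℝ X).continuous
    rw [image_image] at hxF ⊢
    exact closure_minimal ((image_mono hd).trans (image_closure_subset_closure_image hcont))
      isClosed_closure hxF
  refine ⟨WeakDual.toStrongDual x, ?_, ?_⟩
  · rintro ⟨z, hz⟩
    exact hxX ⟨e z, WeakDual.toStrongDual.injective hz⟩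
  intro G η hη
  have hU : IsOpen {y : WeakDual ℝ (StrongDual ℝ X) | ∀ g ∈ G, |y g - x g| < η} := by
    simp only [ofPred_forall]
    exact isOpen_biInter_finset fun g _ =>
      isOpen_lt ((continuous_sub_right _).abs.comp (WeakDual.eval_continuous g)) continuous_const
  obtain ⟨_, hyU, _, ⟨_, ⟨n, rfl⟩, rfl⟩, rfl⟩ := mem_closure_iff.1 hxd _ hU (by simp [hη])
  exact ⟨n, fun g hg => hyU g hg⟩

end

theorem tree_ill_founded_of_not_weaklyCompact_general
    {X : Type*} [NormedAddCommGroup X] [NormedSpace ℝ X] [CompleteSpace X]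
    (d : ℕ → {F : Set X // IsClosed F} → X)
    (hdense : ∀ K : {F : Set X // IsClosed F}, (K : Set X).Nonempty →
      closure (Set.range fun n => d n K) = (K : Set X))
    (F : {F : Set X // IsClosed F}) (hFne : (F : Set X).Nonempty)
    (hFbdd : Bornology.IsBounded (F : Set X)) (hFconv : Convex ℝ (F : Set X))
    (hFnwc : ¬ IsCompact (toWeakSpace ℝ X '' (F : Set X))) :
    ∃ ε M : ℝ, 0 < ε ∧ ε ≤ 1 ∧ 1 ≤ M ∧
      ∃ u : ℕ → ℕ, ∀ m : ℕ,
        MSchauder M m (fun n => d (u n) F) ∧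
        DominatesSummingBasis ε m (fun n => d (u n) F) := by
  obtain ⟨x, hxX, happrox⟩ := exists_bidual_notMem_range_approx F.2 hFconv hFbdd hFnwc (d · F)
    (hdense F hFne).superset
  exact exists_branch_of_weakStar_approx _
    (NormedSpace.inclusionInDoubleDualLi ℝ (E := X)).isometry _ hxX happrox

/-- If `F` is a nonempty closed bounded convex subset of a separable Banach space which
is **not** weakly compact, then for some `0 < ε ≤ 1 ≤ M` there is an infinite branch
`(u n)` of the tree `T(F, ε, M)`: for every `m`, the finite sequence
`(d (u 0) F, …, d (u (m-1)) F)` is `M`-Schauder and `ε`-dominates the summing basis. -/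
theorem tree_ill_founded_of_not_weaklyCompact
    {X : Type*} [NormedAddCommGroup X] [NormedSpace ℝ X] [CompleteSpace X]
    [TopologicalSpace.SeparableSpace X] [MeasurableSpace X] [BorelSpace X]
    (d : ℕ → {F : Set X // IsClosed F} → X)
    (hd : ∀ n, @Measurable _ _ (effrosBorel X) _ (d n))
    (hdmem : ∀ K : {F : Set X // IsClosed F}, (K : Set X).Nonempty → ∀ n, d n K ∈ (K : Set X))
    (hdense : ∀ K : {F : Set X // IsClosed F}, (K : Set X).Nonempty →
      closure (Set.range fun n => d n K) = (K : Set X))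
    (F : {F : Set X // IsClosed F}) (hFne : (F : Set X).Nonempty)
    (hFbdd : Bornology.IsBounded (F : Set X)) (hFconv : Convex ℝ (F : Set X))
    (hFnwc : ¬ IsCompact (toWeakSpace ℝ X '' (F : Set X))) :
    ∃ ε M : ℝ, 0 < ε ∧ ε ≤ 1 ∧ 1 ≤ M ∧
      ∃ u : ℕ → ℕ, ∀ m : ℕ,
        MSchauder M m (fun n => d (u n) F) ∧
        DominatesSummingBasis ε m (fun n => d (u n) F) :=
  tree_ill_founded_of_not_weaklyCompact_general d hdense F hFne hFbdd hFconv hFnwc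
end
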